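/- Every gradient n-path of Δ(F) has all its n-simplexes lying in the interiors of n-simplexes of L; i.e., a gradient n-path in the barycentric subdivision never enters the interior of a simplex of L of dimension greater than n. -/

import Mathlib

/-- An ordered partition of a finite set `S`: a list of pairwise disjoint nonempty
blocks whose union is `S`. -/
def IsOrderedPartition (S : Finset ℕ) (l : List (Finset ℕ)) : Prop :=
  (∀ I ∈ l, I.Nonempty) ∧ l.Pairwise Disjoint ∧ l.foldr (· ∪ ·) ∅ = S

/-- The non-critical pairing (lower, higher) for a pair `(α, β)` with `β = α ∪ {v}`,
`A` the vertex set of `α`: rules 1/2 (append/delete the final singleton `{v}`) and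
rules 3/4 (split `v` out leftward / merge the singleton `{v}` with the following block). -/
def NCPair (v : ℕ) (A : Finset ℕ) (p q : List (Finset ℕ)) : Prop :=
  (IsOrderedPartition A p ∧ q = p ++ [{v}]) ∨
  (∃ l I r, v ∉ I ∧ I.Nonempty ∧ p = l ++ (insert v I :: r) ∧ q = l ++ ({v} :: I :: r))

/-- `p` is the label of a facet (codimension-one face) of the simplex with label `q`:
either merge two adjacent blocks, or delete the last block. -/
def LabelFacet (p q : List (Finset ℕ)) : Prop :=
  (∃ l I J r, q = l ++ (I :: J :: r) ∧ p = l ++ ((I ∪ J) :: r)) ∨ (∃ I, q = p ++ [I])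

/-- A V-path `β₀, α₁, β₁, α₂, …, β_m, α_{m+1}` of a discrete vector field:
`upper i` is `β_i`, `lower i` is `α_{i+1}`; each `α_{i+1}` is a facet of `β_i`,
each `(α_i, β_i)` (for `1 ≤ i ≤ m`) is a pair of the field, and `αᵢ ≠ αᵢ₊₁`. -/
structure VPath {σ : Type} (Facet : σ → σ → Prop) (Pair : σ → σ → Prop) where
  len : ℕ
  upper : ℕ → σ
  lower : ℕ → σ
  face_step : ∀ i ≤ len, Facet (lower i) (upper i)
  pair_step : ∀ i < len, Pair (lower i) (upper (i+1))
  lower_ne : ∀ i < len, lower i ≠ lower (i+1)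

/-- The underlying sequence of simplexes of a V-path. -/
def pathList {σ : Type} {F P : σ → σ → Prop} (Γ : VPath F P) : List σ :=
  (List.range (Γ.len+1)).flatMap (fun i => [Γ.upper i, Γ.lower i])

/-- The length of the greatest common suffix of two lists of blocks. -/
def gcs (p q : List (Finset ℕ)) : ℕ :=
  ((p.reverse.zip q.reverse).takeWhile (fun x => x.1 == x.2)).length

/-- The list `[n+1, n, …, 1]`. -/
def ordRev (n : ℕ) : List ℕ := (List.range (n+1)).map (fun i => n+1-i)

/-- The label `({n+1}, {n}, …, {1})` of the distinguished simplex `α'`. -/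
def alphaPrime (n : ℕ) : List (Finset ℕ) := (ordRev n).map (fun a => ({a} : Finset ℕ))

/-- The critical pairing (lower, higher) relative to a chosen vertex order `o`
(so that `λ(α') = o.map singleton`): with `i` the length of the greatest common
suffix with `λ(α')` and `x` the entry occupying the `(i+1)`-st block from the end
of `λ(α')`, pair by splitting `x` out leftward / merging the singleton `{x}` with
the following block. -/
def CritPair (o : List ℕ) (p q : List (Finset ℕ)) : Prop :=
  ∃ x l I r, (o.reverse)[gcs q (o.map (fun a => ({a} : Finset ℕ)))]? = some x ∧
    x ∉ I ∧ I.Nonempty ∧ p = l ++ (insert x I :: r) ∧ q = l ++ ({x} :: I :: r)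

/-- An abstract simplicial complex on vertex set `ℕ`. -/
structure AbsSC where
  faces : Set (Finset ℕ)
  nonempty_of_mem : ∀ s ∈ faces, s.Nonempty
  down_closed : ∀ s ∈ faces, ∀ t : Finset ℕ, t ⊆ s → t.Nonempty → t ∈ faces

/-- Simplexes of the barycentric subdivision `Δ(L)`, encoded as nonempty strictly
increasing chains of simplexes of `L`. -/
def IsBarySimplex (L : AbsSC) (c : List (Finset ℕ)) : Prop :=
  c ≠ [] ∧ c.Chain' (· ⊂ ·) ∧ ∀ t ∈ c, t ∈ L.faces

/-- The carrier of a simplex of `Δ(L)`: the maximal simplex of its chain, i.e. the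
simplex of `L` in whose interior it lies. -/
def carrier (c : List (Finset ℕ)) : Finset ℕ := c.getLastD ∅

/-- The label of a chain `s₁ ⊂ s₂ ⊂ ⋯ ⊂ s_{k+1}`: the ordered partition
`(s₁, s₂ \\ s₁, …, s_{k+1} \\ s_k)`. -/
def label : List (Finset ℕ) → List (Finset ℕ)
  | [] => []
  | s :: rest => s :: List.zipWith (fun a b => b \ a) (s :: rest) rest

/-- Facet relation between simplexes of `Δ(L)`: subchain of codimension one. -/
def FacetChain (c d : List (Finset ℕ)) : Prop := c.Sublist d ∧ c.length + 1 = d.length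

/-- Facet relation between simplexes of `L`. -/
def FacetFS (s t : Finset ℕ) : Prop := s ⊆ t ∧ t.card = s.card + 1

/-- `F` is a discrete vector field on `L`: each pair consists of a simplex and a
cofacet and each simplex participates in at most one pair. -/
def IsDVF (L : AbsSC) (F : Finset ℕ → Finset ℕ → Prop) : Prop :=
  (∀ s t, F s t → s ∈ L.faces ∧ t ∈ L.faces ∧ s ⊆ t ∧ t.card = s.card + 1) ∧
  (∀ s t t', F s t → F s t' → t = t') ∧
  (∀ s s' t, F s t → F s' t → s = s') ∧
  (∀ s t u, F s t → ¬ F t u)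

/-- A simplex is critical for `F` if it participates in no pair. -/
def CriticalF (F : Finset ℕ → Finset ℕ → Prop) (s : Finset ℕ) : Prop :=
  (∀ t, ¬ F s t) ∧ (∀ t, ¬ F t s)

/-- `Ord` assigns to each critical simplex of `F` an ordering of its vertices
(the blocks, read left to right, of the chosen label of `α'`). -/
def OrdValid (L : AbsSC) (F : Finset ℕ → Finset ℕ → Prop) (Ord : Finset ℕ → List ℕ) : Prop :=
  ∀ s ∈ L.faces, CriticalF F s → (Ord s).Nodup ∧ (Ord s).toFinset = s

/-- The discrete vector field `Δ(F)` on the barycentric subdivision: inside each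
critical simplex use the greatest-common-suffix pairing relative to the chosen
ordering; inside each non-critical pair `(s, insert v s) ∈ F` use the four rules
with distinguished entry `v`. -/
def DeltaPair (L : AbsSC) (F : Finset ℕ → Finset ℕ → Prop) (Ord : Finset ℕ → List ℕ)
    (c d : List (Finset ℕ)) : Prop :=
  IsBarySimplex L c ∧ IsBarySimplex L d ∧
  ((CriticalF F (carrier c) ∧ carrier d = carrier c ∧
      CritPair (Ord (carrier c)) (label c) (label d)) ∨
   (∃ s v, F s (insert v s) ∧ v ∉ s ∧
     ((carrier c = s ∧ carrier d = insert v s ∧ label d = label c ++ [{v}]) ∨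
      (carrier c = insert v s ∧ carrier d = insert v s ∧
       ∃ l I r, v ∉ I ∧ I.Nonempty ∧ label c = l ++ (insert v I :: r) ∧
         label d = l ++ ({v} :: I :: r)))))

/-- Critical simplexes of `Δ(F)`. -/
def CritDelta (L : AbsSC) (F : Finset ℕ → Finset ℕ → Prop) (Ord : Finset ℕ → List ℕ)
    (c : List (Finset ℕ)) : Prop :=
  IsBarySimplex L c ∧ ∀ d, ¬ DeltaPair L F Ord c d ∧ ¬ DeltaPair L F Ord d c



section TW
open List
variable {α : Type*}

lemma tw_prefix_prop (l : List α) (p : α → Bool) :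
    ∀ j < (l.takeWhile p).length, ∃ x, l[j]? = some x ∧ p x := by
  induction l with
  | nil => simp
  | cons a l ih =>
    intro j hj
    by_cases hpa : p a
    · rw [List.takeWhile_cons_of_pos hpa] at hj
      cases j with
      | zero => exact ⟨a, rfl, hpa⟩
      | succ j => simpa using ih j (by simpa using hj)
    · rw [List.takeWhile_cons_of_neg (by simpa using hpa)] at hj
      simp at hj

lemma tw_stop (l : List α) (p : α → Bool) :
    ∀ x, l[(l.takeWhile p).length]? = some x → p x = false := by
  induction l with
  | nil => simp
  | cons a l ih =>
    intro x hx
    by_cases hpa : p a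
    · rw [List.takeWhile_cons_of_pos hpa] at hx
      exact ih x (by simpa using hx)
    · rw [List.takeWhile_cons_of_neg (by simpa using hpa)] at hx
      simp at hx
      subst hx
      simpa using hpa

lemma tw_intro (l : List α) (p : α → Bool) (i : ℕ)
    (h1 : ∀ j < i, ∃ x, l[j]? = some x ∧ p x)
    (h2 : ∀ x, l[i]? = some x → p x = false) :
    (l.takeWhile p).length = i := by
  induction l generalizing i with
  | nil =>
    cases i with
    | zero => simp
    | succ i =>
      obtain ⟨x, hx, -⟩ := h1 0 (Nat.succ_pos _)
      simp at hx
  | cons a l ih =>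
    cases i with
    | zero =>
      have := h2 a rfl
      rw [List.takeWhile_cons_of_neg (by simp [this])]
      rfl
    | succ i =>
      obtain ⟨x, hx, hpx⟩ := h1 0 (Nat.succ_pos _)
      simp only [List.getElem?_cons_zero, Option.some_inj] at hx
      subst hx
      rw [List.takeWhile_cons_of_pos hpx]
      simp only [List.length_cons]
      congr 1
      exact ih i (fun j hj => h1 (j+1) (by omega)) (fun x hx => h2 x hx)

end TW

lemma gcs_intro' (q full : List (Finset ℕ)) (i : ℕ)
    (hmatch : ∀ j < i, ∃ B, q.reverse[j]? = some B ∧ full.reverse[j]? = some B)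
    (hmis : ∀ B B', q.reverse[i]? = some B → full.reverse[i]? = some B' → B ≠ B') :
    gcs q full = i := by
  apply tw_intro
  · intro j hj
    obtain ⟨B, h1, h2⟩ := hmatch j hj
    exact ⟨(B, B), List.getElem?_zip_eq_some.2 ⟨h1, h2⟩, by simp⟩
  · intro x hx
    rw [List.getElem?_zip_eq_some] at hx
    have := hmis x.1 x.2 hx.1 hx.2
    simpa using this

lemma gcs_elim_match (q full : List (Finset ℕ)) :
    ∀ j < gcs q full, ∃ B, q.reverse[j]? = some B ∧ full.reverse[j]? = some B := by
  intro j hj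
  obtain ⟨x, hx, hpx⟩ := tw_prefix_prop _ _ j hj
  rw [List.getElem?_zip_eq_some] at hx
  have : x.1 = x.2 := by simpa using hpx
  exact ⟨x.1, hx.1, this ▸ hx.2⟩

lemma gcs_elim_mis (q full : List (Finset ℕ)) (B B' : Finset ℕ)
    (h1 : q.reverse[gcs q full]? = some B)
    (h2 : full.reverse[gcs q full]? = some B') : B ≠ B' := by
  have := tw_stop (q.reverse.zip full.reverse) (fun x => x.1 == x.2) (B, B')
    (List.getElem?_zip_eq_some.2 ⟨h1, h2⟩)
  simpa using this


/-! ### label machinery -/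

lemma getLastD_cons' {α : Type*} (t a : α) (r : List α) :
    (t :: r).getLastD a = r.getLastD t := by
  cases r <;> simp [List.getLastD]

lemma getLast?_getD_cons {α : Type*} (t a : α) (r : List α) :
    ((t :: r).getLast?).getD a = (r.getLast?).getD t := by
  rw [← List.getLastD_eq_getLast?, ← List.getLastD_eq_getLast?, getLastD_cons']

def labelF : Finset ℕ → List (Finset ℕ) → List (Finset ℕ)
  | _, [] => []
  | a, t :: r => (t \ a) :: labelF t r

lemma labelF_eq_zipWith : ∀ (rest : List (Finset ℕ)) (s : Finset ℕ),
    labelF s rest = List.zipWith (fun a b => b \ a) (s :: rest) rest := by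
  intro rest
  induction rest with
  | nil => intro s; rfl
  | cons t r ih => intro s; simp [labelF, ih t]

lemma label_eq_labelF (c : List (Finset ℕ)) : label c = labelF ∅ c := by
  cases c with
  | nil => rfl
  | cons s rest =>
    simp [label, labelF, labelF_eq_zipWith]

lemma labelF_length (a : Finset ℕ) (c : List (Finset ℕ)) :
    (labelF a c).length = c.length := by
  induction c generalizing a with
  | nil => rfl
  | cons t r ih => simp [labelF, ih]

lemma labelF_append (c d : List (Finset ℕ)) (a : Finset ℕ) :
    labelF a (c ++ d) = labelF a c ++ labelF (c.getLastD a) d := by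
  induction c generalizing a with
  | nil => simp [labelF]
  | cons t r ih => simp [labelF, ih, getLastD_cons', getLast?_getD_cons]

lemma labelF_decomp' :
    ∀ (c : List (Finset ℕ)) (a : Finset ℕ) (l : List (Finset ℕ)) (B : Finset ℕ)
      (r : List (Finset ℕ)), labelF a c = l ++ B :: r →
    ∃ c₁ u c₂, c = c₁ ++ u :: c₂ ∧ labelF a c₁ = l ∧ B = u \ (c₁.getLastD a) ∧
      labelF u c₂ = r := by
  intro c
  induction c with
  | nil => intro a l B r h; simp [labelF] at h
  | cons t c' ih =>
    intro a l B r h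
    simp only [labelF] at h
    cases l with
    | nil =>
      simp only [List.nil_append, List.cons.injEq] at h
      exact ⟨[], t, c', by simp, rfl, by simpa using h.1.symm, h.2⟩
    | cons B' l' =>
      simp only [List.cons_append, List.cons.injEq] at h
      obtain ⟨c₁, u, c₂, hc, hl, hB, hr⟩ := ih t l' B r h.2
      exact ⟨t :: c₁, u, c₂, by simp [hc], by simp [labelF, hl, h.1.symm],
        by simpa [getLastD_cons', getLast?_getD_cons] using hB, hr⟩

lemma labelF_union : ∀ (c : List (Finset ℕ)) (a : Finset ℕ),
    (a :: c).Chain' (· ⊆ ·) → a ∪ (labelF a c).foldr (· ∪ ·) ∅ = c.getLastD a := by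
  intro c
  induction c with
  | nil => intro a _; simp [labelF]
  | cons t r ih =>
    intro a h
    have h1 : a ⊆ t := (List.isChain_cons_cons.1 h).1
    have h2 := (List.isChain_cons_cons.1 h).2
    simp only [labelF, List.foldr_cons, getLastD_cons']
    rw [← ih t h2, ← Finset.union_assoc, Finset.union_sdiff_self_eq_union,
      Finset.union_eq_right.2 h1]

lemma mem_foldr_union : ∀ (q : List (Finset ℕ)) (x : ℕ), x ∈ q.foldr (· ∪ ·) ∅ →
    ∃ l B r, q = l ++ B :: r ∧ x ∈ B := by
  intro q
  induction q with
  | nil => simp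
  | cons B q ih =>
    intro x hx
    simp only [List.foldr_cons, Finset.mem_union] at hx
    rcases hx with hx | hx
    · exact ⟨[], B, q, rfl, hx⟩
    · obtain ⟨l, B', r, hq, hB⟩ := ih x hx
      exact ⟨B :: l, B', r, by simp [hq], hB⟩

lemma getLastD_eq_of_ne_nil : ∀ (c : List (Finset ℕ)), c ≠ [] →
    ∀ (a b : Finset ℕ), c.getLastD a = c.getLastD b := by
  intro c
  induction c with
  | nil => simp
  | cons t r ih =>
    intro _ a b
    cases r with
    | nil => simp
    | cons u r' => rw [getLastD_cons' t a (u::r'), getLastD_cons' t b (u::r')]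

lemma subset_getLastD : ∀ (c : List (Finset ℕ)) (a : Finset ℕ),
    (a :: c).Chain' (· ⊆ ·) → a ⊆ c.getLastD a := by
  intro c
  induction c with
  | nil => intro a _; simp
  | cons t r ih =>
    intro a h
    rw [getLastD_cons']
    exact (List.isChain_cons_cons.1 h).1.trans (ih t (List.isChain_cons_cons.1 h).2)

lemma chain'_subset_of_ssubset {c : List (Finset ℕ)} (h : c.Chain' (· ⊂ ·)) :
    c.Chain' (· ⊆ ·) :=
  List.IsChain.imp (fun _ _ hab => hab.subset) h

lemma mem_subset_carrier (c : List (Finset ℕ)) (h : c.Chain' (· ⊂ ·)) :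
    ∀ t ∈ c, t ⊆ carrier c := by
  induction c with
  | nil => simp
  | cons u c' ih =>
    intro t ht
    rcases List.mem_cons.1 ht with rfl | ht
    · show t ⊆ (t :: c').getLastD ∅
      rw [getLastD_cons']
      exact subset_getLastD c' t (chain'_subset_of_ssubset h)
    · have hc' : c' ≠ [] := by rintro rfl; simp at ht
      have := ih (List.isChain_cons.1 h).2 t ht
      show t ⊆ (u :: c').getLastD ∅
      rw [getLastD_cons', getLastD_eq_of_ne_nil c' hc' u ∅]
      exact this

lemma length_add_card_le : ∀ (c : List (Finset ℕ)) (a : Finset ℕ),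
    (a :: c).Chain' (· ⊂ ·) → c.length + a.card ≤ (c.getLastD a).card := by
  intro c
  induction c with
  | nil => intro a _; simp
  | cons t r ih =>
    intro a h
    have h1 : a ⊂ t := (List.isChain_cons_cons.1 h).1
    have := ih t (List.isChain_cons_cons.1 h).2
    have hcard : a.card < t.card := Finset.card_lt_card h1
    rw [getLastD_cons']
    simp only [List.length_cons]
    omega

lemma length_le_card_carrier (c : List (Finset ℕ)) (hne : c ≠ [])
    (h : c.Chain' (· ⊂ ·)) (hnonempty : ∀ t ∈ c, t.Nonempty) :
    c.length ≤ (carrier c).card := by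
  cases c with
  | nil => simp at hne
  | cons s rest =>
    have h1 : 1 ≤ s.card := Finset.card_pos.2 (hnonempty s (by simp))
    have := length_add_card_le rest s h
    show rest.length + 1 ≤ ((s :: rest).getLastD ∅).card
    rw [getLastD_cons']
    omega

/-! ### positional lemmas -/

lemma get?_rev_pos {q l r : List (Finset ℕ)} {B : Finset ℕ} (h : q = l ++ B :: r) :
    q.reverse[r.length]? = some B := by
  subst h
  rw [show (l ++ B :: r).reverse = r.reverse ++ B :: l.reverse by simp]
  rw [List.getElem?_append_right (by simp), List.length_reverse, Nat.sub_self]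
  rfl

lemma get?_rev_lt {q l r : List (Finset ℕ)} {B : Finset ℕ} (h : q = l ++ B :: r)
    {j : ℕ} (hj : j < r.length) : q.reverse[j]? = r.reverse[j]? := by
  subst h
  rw [show (l ++ B :: r).reverse = r.reverse ++ B :: l.reverse by simp]
  rw [List.getElem?_append_left (by simpa using hj)]

lemma exists_decomp_at : ∀ (q : List (Finset ℕ)) (i : ℕ), i < q.length →
    ∃ l B r, q = l ++ B :: r ∧ r.length = i := by
  intro q
  induction q with
  | nil => simp
  | cons B₀ q' ih =>
    intro i hi
    rcases Nat.lt_or_ge i q'.length with h | h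
    · obtain ⟨l, B, r, hq, hr⟩ := ih i h
      exact ⟨B₀ :: l, B, r, by simp [hq], hr⟩
    · have : i = q'.length := by simp at hi; omega
      exact ⟨[], B₀, q', by simp, this.symm⟩

lemma gcs_suffix {l l' r full : List (Finset ℕ)} {i : ℕ} (hi : i < r.length)
    (h : gcs (l ++ r) full = i) : gcs (l' ++ r) full = i := by
  have hrev : ∀ (m : List (Finset ℕ)) (j), j < r.length →
      (m ++ r).reverse[j]? = r.reverse[j]? := by
    intro m j hj
    rw [show (m ++ r).reverse = r.reverse ++ m.reverse by simp]
    rw [List.getElem?_append_left (by simpa using hj)]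
  apply gcs_intro'
  · intro j hj
    obtain ⟨B, h1, h2⟩ := gcs_elim_match (l ++ r) full j (h ▸ hj)
    refine ⟨B, ?_, h2⟩
    rw [hrev l' j (by omega), ← hrev l j (by omega)]
    exact h1
  · intro B B' h1 h2
    apply gcs_elim_mis (l ++ r) full B B' _ (h ▸ h2)
    rw [h, hrev l i hi, ← hrev l' i hi]
    exact h1

/-! ### basic bary facts -/

lemma getLastD_mem' : ∀ (c : List (Finset ℕ)), c ≠ [] → ∀ a, c.getLastD a ∈ c := by
  intro c
  induction c with
  | nil => simp
  | cons t r ih =>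
    intro _ a
    cases r with
    | nil => simp
    | cons u r' =>
      rw [getLastD_cons']
      exact List.mem_cons_of_mem _ (ih (by simp) t)

lemma carrier_mem {c : List (Finset ℕ)} (hc : c ≠ []) : carrier c ∈ c :=
  getLastD_mem' c hc ∅

lemma carrier_mem_faces {L : AbsSC} {c : List (Finset ℕ)} (h : IsBarySimplex L c) :
    carrier c ∈ L.faces :=
  h.2.2 _ (carrier_mem h.1)

lemma label_union {c : List (Finset ℕ)} (h : c.Chain' (· ⊆ ·)) :
    (label c).foldr (· ∪ ·) ∅ = carrier c := by
  have := labelF_union c ∅ (List.isChain_cons.2 ⟨fun y _ => Finset.empty_subset y, h⟩)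
  simpa [label_eq_labelF, carrier] using this

lemma getLastD_append' : ∀ (xs : List (Finset ℕ)) (y : Finset ℕ) (ys : List (Finset ℕ))
    (a b : Finset ℕ), (xs ++ y :: ys).getLastD a = (y :: ys).getLastD b := by
  intro xs
  induction xs with
  | nil =>
    intro y ys a b
    exact getLastD_eq_of_ne_nil _ (by simp) a b
  | cons x xs ih =>
    intro y ys a b
    rw [List.cons_append, getLastD_cons']
    exact ih y ys x b

lemma carrier_append {xs : List (Finset ℕ)} {y : Finset ℕ} {ys : List (Finset ℕ)} :
    carrier (xs ++ y :: ys) = carrier (y :: ys) :=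
  getLastD_append' xs y ys ∅ ∅

/-! ### surgery lemmas -/

lemma getLast?_eq_getLastD {c : List (Finset ℕ)} (h : c ≠ []) (a : Finset ℕ) :
    c.getLast? = some (c.getLastD a) := by
  rw [List.getLastD_eq_getLast?]
  obtain ⟨x, hx⟩ := Option.isSome_iff_exists.mp (List.getLast?_isSome.mpr h)
  simp [hx]

lemma link_of_chain {c₁ : List (Finset ℕ)} {u : Finset ℕ} {c₂ : List (Finset ℕ)}
    (h : (c₁ ++ u :: c₂).Chain' (· ⊂ ·)) :
    c₁.getLastD ∅ ⊆ u ∧ (c₁ ≠ [] → c₁.getLastD ∅ ⊂ u) := by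
  rw [List.Chain', List.isChain_append] at h
  rcases eq_or_ne c₁ [] with rfl | hne
  · simp
  · have := h.2.2 (c₁.getLastD ∅) (by rw [Option.mem_def, getLast?_eq_getLastD hne ∅]) u (by simp)
    exact ⟨this.subset, fun _ => this⟩

lemma split_lemma (L : AbsSC) {c l r : List (Finset ℕ)} {B : Finset ℕ} {x : ℕ}
    (hc : IsBarySimplex L c) (hq : label c = l ++ B :: r) (hx : x ∈ B)
    (hI : (B.erase x).Nonempty) :
    ∃ d, IsBarySimplex L d ∧ carrier d = carrier c ∧
      label d = l ++ ({x} :: B.erase x :: r) := by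
  obtain ⟨c₁, u, c₂, hcdec, hl, hB, hr⟩ :=
    labelF_decomp' c ∅ l B r (by rw [← label_eq_labelF, hq])
  set p := c₁.getLastD ∅ with hp
  have hchain : (c₁ ++ u :: c₂).Chain' (· ⊂ ·) := hcdec ▸ hc.2.1
  have hpu : p ⊆ u := (link_of_chain hchain).1
  rw [hB] at hx hI
  have hxu : x ∈ u := (Finset.mem_sdiff.1 hx).1
  have hxp : x ∉ p := (Finset.mem_sdiff.1 hx).2
  obtain ⟨y, hy⟩ := hI
  have hyx : y ≠ x := (Finset.mem_erase.1 hy).1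
  have hyu : y ∈ u := (Finset.mem_sdiff.1 (Finset.mem_erase.1 hy).2).1
  have hyp : y ∉ p := (Finset.mem_sdiff.1 (Finset.mem_erase.1 hy).2).2
  have huf : u ∈ L.faces := hc.2.2 u (by rw [hcdec]; simp)
  refine ⟨c₁ ++ (insert x p) :: u :: c₂, ⟨by simp, ?_, ?_⟩, ?_, ?_⟩
  · -- chain
    rw [List.Chain', List.isChain_append] at hchain ⊢
    refine ⟨hchain.1, ?_, ?_⟩
    · rw [List.isChain_cons_cons]
      refine ⟨?_, hchain.2.1⟩
      constructor
      · exact Finset.insert_subset hxu hpu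
      · intro hsub
        have := hsub hyu
        simp only [Finset.mem_insert] at this
        tauto
    · intro a ha b hb
      simp only [List.head?_cons, Option.mem_def, Option.some.injEq] at hb
      subst hb
      have hane : c₁ ≠ [] := by rintro rfl; simp at ha
      rw [getLast?_eq_getLastD hane ∅] at ha
      simp only [Option.mem_def, Option.some.injEq] at ha
      subst ha
      exact Finset.ssubset_insert hxp
  · -- faces
    intro t ht
    simp only [List.mem_append, List.mem_cons] at ht
    rcases ht with ht | ht | ht | ht
    · exact hc.2.2 t (by rw [hcdec]; simp [ht])
    · subst ht
      exact L.down_closed u huf _ (Finset.insert_subset hxu hpu) ⟨x, by simp⟩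
    · subst ht; exact huf
    · exact hc.2.2 t (by rw [hcdec]; simp [ht])
  · -- carrier
    rw [carrier_append, hcdec, carrier_append]
    show (insert x p :: u :: c₂).getLastD ∅ = (u :: c₂).getLastD ∅
    rw [getLastD_cons' (insert x p) ∅]
    exact getLastD_eq_of_ne_nil _ (by simp) _ _
  · -- label
    rw [label_eq_labelF, labelF_append, ← hp, hl]
    congr 1
    show (insert x p \ p) :: (u \ insert x p) :: labelF u c₂ = {x} :: B.erase x :: r
    have h1 : insert x p \ p = {x} := by
      ext a
      simp only [Finset.mem_sdiff, Finset.mem_insert, Finset.mem_singleton]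
      constructor
      · rintro ⟨ha | ha, hn⟩
        · exact ha
        · exact absurd ha hn
      · rintro rfl; exact ⟨Or.inl rfl, hxp⟩
    have h2 : u \ insert x p = B.erase x := by
      rw [hB]
      ext a
      simp only [Finset.mem_sdiff, Finset.mem_insert, Finset.mem_erase]
      tauto
    rw [h1, h2, hr]

lemma merge_lemma (L : AbsSC) {c l r : List (Finset ℕ)} {B₁ B₂ : Finset ℕ}
    (hc : IsBarySimplex L c) (hq : label c = l ++ B₁ :: B₂ :: r) :
    ∃ d, IsBarySimplex L d ∧ carrier d = carrier c ∧ label d = l ++ ((B₁ ∪ B₂) :: r) ∧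
      Disjoint B₁ B₂ ∧ B₂.Nonempty := by
  obtain ⟨c₁, w, c₂, hcdec, hl, hB₁, hr⟩ :=
    labelF_decomp' c ∅ l B₁ (B₂ :: r) (by rw [← label_eq_labelF, hq])
  set p := c₁.getLastD ∅ with hp
  obtain ⟨u, c₂', rfl⟩ : ∃ u c₂', c₂ = u :: c₂' := by
    cases c₂ with
    | nil => simp [labelF] at hr
    | cons u c₂' => exact ⟨u, c₂', rfl⟩
  have hB₂ : B₂ = u \ w ∧ r = labelF u c₂' := by
    simpa [labelF] using hr.symm
  have hchain : (c₁ ++ w :: u :: c₂').Chain' (· ⊂ ·) := hcdec ▸ hc.2.1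
  have hpw : p ⊆ w := (link_of_chain hchain).1
  have hwu : w ⊂ u := by
    rw [List.Chain', List.isChain_append, List.isChain_cons_cons] at hchain
    exact hchain.2.1.1
  refine ⟨c₁ ++ u :: c₂', ⟨by simp, ?_, ?_⟩, ?_, ?_, ?_, ?_⟩
  · -- chain
    rw [List.Chain', List.isChain_append] at hchain ⊢
    refine ⟨hchain.1, (List.isChain_cons_cons.1 hchain.2.1).2, ?_⟩
    intro a ha b hb
    simp only [List.head?_cons, Option.mem_def, Option.some.injEq] at hb
    subst hb
    have := hchain.2.2 a ha w (by simp)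
    exact this.trans hwu
  · -- faces
    intro t ht
    apply hc.2.2 t
    rw [hcdec]
    simp only [List.mem_append, List.mem_cons] at ht ⊢
    tauto
  · -- carrier
    rw [carrier_append, hcdec, carrier_append]
    show (u :: c₂').getLastD ∅ = (w :: u :: c₂').getLastD ∅
    rw [getLastD_cons' w ∅]
    exact getLastD_eq_of_ne_nil _ (by simp) _ _
  · -- label
    rw [label_eq_labelF, labelF_append, ← hp, hl]
    congr 1
    show (u \ p) :: labelF u c₂' = (B₁ ∪ B₂) :: r
    have h1 : u \ p = B₁ ∪ B₂ := by
      rw [hB₁, hB₂.1]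
      ext a
      simp only [Finset.mem_sdiff, Finset.mem_union]
      have h' : a ∈ p → a ∈ w := fun h => hpw h
      have h'' : a ∈ w → a ∈ u := fun h => hwu.subset h
      tauto
    rw [h1, ← hB₂.2]
  · -- disjoint
    rw [hB₁, hB₂.1, Finset.disjoint_left]
    intro a ha ha'
    exact (Finset.mem_sdiff.1 ha').2 (Finset.mem_sdiff.1 ha).1
  · -- nonempty
    rw [hB₂.1]
    obtain ⟨a, ha, ha'⟩ := Finset.exists_of_ssubset hwu
    exact ⟨a, Finset.mem_sdiff.2 ⟨ha, ha'⟩⟩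

lemma label_snoc (c : List (Finset ℕ)) (t : Finset ℕ) :
    label (c ++ [t]) = label c ++ [t \ carrier c] := by
  rw [label_eq_labelF, label_eq_labelF, labelF_append]
  rfl

lemma carrier_snoc (c : List (Finset ℕ)) (t : Finset ℕ) : carrier (c ++ [t]) = t :=
  carrier_append (xs := c) (y := t) (ys := [])

lemma bary_snoc (L : AbsSC) {c : List (Finset ℕ)} {t : Finset ℕ} (hc : IsBarySimplex L c)
    (ht : t ∈ L.faces) (hlt : carrier c ⊂ t) : IsBarySimplex L (c ++ [t]) := by
  refine ⟨by simp, ?_, ?_⟩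
  · rw [List.Chain', List.isChain_append]
    refine ⟨hc.2.1, by simp, ?_⟩
    intro a ha b hb
    simp only [List.head?_cons, Option.mem_def, Option.some.injEq] at hb
    subst hb
    rw [getLast?_eq_getLastD hc.1 ∅] at ha
    simp only [Option.mem_def, Option.some.injEq] at ha
    subst ha
    exact hlt
  · intro s hs
    simp only [List.mem_append, List.mem_cons] at hs
    rcases hs with hs | hs | hs
    · exact hc.2.2 s hs
    · subst hs; exact ht
    · simp at hs

/-! ### critical chains have critical carriers -/

lemma singleton_diff {v : ℕ} {s : Finset ℕ} (hv : v ∉ s) : insert v s \ s = {v} := by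
  ext a
  simp only [Finset.mem_sdiff, Finset.mem_insert, Finset.mem_singleton]
  constructor
  · rintro ⟨ha | ha, hn⟩
    · exact ha
    · exact absurd ha hn
  · rintro rfl; exact ⟨Or.inl rfl, hv⟩

lemma crit_not_up {L : AbsSC} {F : Finset ℕ → Finset ℕ → Prop} {Ord : Finset ℕ → List ℕ}
    (hF : IsDVF L F) {c : List (Finset ℕ)} (hc : CritDelta L F Ord c) :
    ∀ t, ¬ F (carrier c) t := by
  intro t ht
  obtain ⟨hccf, htf, hsub, hcard⟩ := hF.1 _ _ ht
  have hne : (t \ carrier c).Nonempty := by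
    rw [← Finset.card_pos, Finset.card_sdiff_of_subset hsub]
    omega
  obtain ⟨v, hv⟩ := hne
  have hvt : v ∈ t := (Finset.mem_sdiff.1 hv).1
  have hvc : v ∉ carrier c := (Finset.mem_sdiff.1 hv).2
  have hteq : insert v (carrier c) = t := by
    apply Finset.eq_of_subset_of_card_le
    · exact Finset.insert_subset hvt hsub
    · rw [Finset.card_insert_of_notMem hvc]; omega
  have hct : carrier c ⊂ t := Finset.ssubset_iff_subset_ne.2 ⟨hsub, by
    intro h; rw [h] at hcard; omega⟩
  have hd : IsBarySimplex L (c ++ [t]) := bary_snoc L hc.1 htf hct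
  apply (hc.2 (c ++ [t])).1
  refine ⟨hc.1, hd, Or.inr ⟨carrier c, v, ?_, hvc, Or.inl ⟨rfl, ?_, ?_⟩⟩⟩
  · rw [hteq]; exact ht
  · rw [carrier_snoc, hteq]
  · rw [label_snoc, ← hteq, singleton_diff hvc]

lemma bary_prefix (L : AbsSC) {c₁ : List (Finset ℕ)} {w : Finset ℕ}
    (hc : IsBarySimplex L (c₁ ++ [w])) (hne : c₁ ≠ []) : IsBarySimplex L c₁ := by
  refine ⟨hne, ?_, ?_⟩
  · exact (List.isChain_append.1 hc.2.1).1
  · intro t ht; exact hc.2.2 t (by simp [ht])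

lemma crit_not_down {L : AbsSC} {F : Finset ℕ → Finset ℕ → Prop} {Ord : Finset ℕ → List ℕ}
    (hF : IsDVF L F) {c : List (Finset ℕ)} (hc : CritDelta L F Ord c) :
    ∀ t, ¬ F t (carrier c) := by
  intro t ht
  obtain ⟨htf, hccf, hsub, hcard⟩ := hF.1 _ _ ht
  obtain ⟨v, hv⟩ : ∃ v, carrier c \ t = {v} := by
    apply Finset.card_eq_one.1
    rw [Finset.card_sdiff_of_subset hsub]; omega
  have hvc : v ∈ carrier c := by
    have : v ∈ carrier c \ t := hv ▸ Finset.mem_singleton_self v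
    exact (Finset.mem_sdiff.1 this).1
  have hvt : v ∉ t := by
    have : v ∈ carrier c \ t := hv ▸ Finset.mem_singleton_self v
    exact (Finset.mem_sdiff.1 this).2
  have hceq : carrier c = insert v t := by
    ext a
    simp only [Finset.mem_insert]
    constructor
    · intro ha
      by_cases hat : a ∈ t
      · exact Or.inr hat
      · left
        have : a ∈ carrier c \ t := Finset.mem_sdiff.2 ⟨ha, hat⟩
        rw [hv] at this
        simpa using this
    · rintro (rfl | ha)
      · exact hvc
      · exact hsub ha
  have ht' : F t (insert v t) := hceq ▸ ht
  -- v lies in some block of the label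
  have hvu : v ∈ (label c).foldr (· ∪ ·) ∅ := by
    rw [label_union (chain'_subset_of_ssubset hc.1.2.1)]
    exact hvc
  obtain ⟨l, B, r, hq, hvB⟩ := mem_foldr_union _ v hvu
  rcases Finset.eq_empty_or_nonempty (B.erase v) with hBe | hBe
  · -- B = {v}
    have hBv : B = {v} := by
      ext a
      simp only [Finset.mem_singleton]
      constructor
      · intro ha
        by_contra hav
        have : a ∈ B.erase v := Finset.mem_erase.2 ⟨hav, ha⟩
        rw [hBe] at this; simp at this
      · rintro rfl; exact hvB
    subst hBv
    cases r with
    | nil =>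
      -- delete last block
      obtain ⟨c₁, w, c₂, hcdec, hl, hB, hr⟩ :=
        labelF_decomp' c ∅ l {v} [] (by rw [← label_eq_labelF, hq])
      obtain rfl : c₂ = [] := by
        cases c₂ with
        | nil => rfl
        | cons a b => simp [labelF] at hr
      set p := c₁.getLastD ∅ with hp
      have hchain : (c₁ ++ [w]).Chain' (· ⊂ ·) := hcdec ▸ hc.1.2.1
      have hpw : p ⊆ w := (link_of_chain hchain).1
      have hweq : w = carrier c := by rw [hcdec, carrier_snoc]
      have hpt : p = t := by
        have hvp : v ∉ p := by
          have : v ∈ w \ p := by rw [← hB]; simp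
          exact (Finset.mem_sdiff.1 this).2
        ext a
        constructor
        · intro ha
          have haw : a ∈ w := hpw ha
          have hav : a ≠ v := by rintro rfl; exact hvp ha
          have : a ∈ carrier c := hweq ▸ haw
          rw [hceq] at this
          simp only [Finset.mem_insert] at this
          tauto
        · intro ha
          by_contra hap
          have haw : a ∈ w := by
            rw [hweq, hceq]; exact Finset.mem_insert_of_mem ha
          have : a ∈ w \ p := Finset.mem_sdiff.2 ⟨haw, hap⟩
          rw [← hB] at this
          simp only [Finset.mem_singleton] at this
          subst this
          exact hvt ha
      have hc₁ne : c₁ ≠ [] := by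
        rintro rfl
        simp only [List.getLastD_nil] at hp
        have := L.nonempty_of_mem t htf
        rw [← hpt, hp] at this
        simp [Finset.Nonempty] at this
      apply (hc.2 c₁).2
      refine ⟨bary_prefix L (hcdec ▸ hc.1) hc₁ne, hc.1,
        Or.inr ⟨t, v, ht', hvt, Or.inl ⟨?_, hceq.symm ▸ rfl, ?_⟩⟩⟩
      · show carrier c₁ = t
        rw [carrier, ← hp, hpt]
      · rw [hq, label_eq_labelF, hl]
    | cons B₂ r' =>
      -- merge {v} with the following block
      obtain ⟨d, hd, hdc, hdl, hdisj, hB₂ne⟩ := merge_lemma L hc.1 hq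
      have hvB₂ : v ∉ B₂ := by
        intro h
        exact (Finset.disjoint_left.1 hdisj (Finset.mem_singleton_self v)) h
      apply (hc.2 d).2
      refine ⟨hd, hc.1, Or.inr ⟨t, v, ht', hvt, Or.inr ⟨?_, hceq, l, B₂, r', hvB₂, hB₂ne,
        ?_, hq⟩⟩⟩
      · rw [hdc, hceq]
      · rw [hdl, ← Finset.insert_eq]
  · -- split v out of B
    obtain ⟨d, hd, hdc, hdl⟩ := split_lemma L hc.1 hq hvB hBe
    apply (hc.2 d).1
    refine ⟨hc.1, hd, Or.inr ⟨t, v, ht', hvt, Or.inr ⟨hceq, hdc ▸ hceq, l, B.erase v, r,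
      by simp, hBe, ?_, hdl⟩⟩⟩
    rw [Finset.insert_erase hvB]
    exact hq

/-! ### critical chains: all blocks are singletons -/

lemma gcs_le_left (q full : List (Finset ℕ)) : gcs q full ≤ q.length := by
  have h1 : ((q.reverse.zip full.reverse).takeWhile (fun x => x.1 == x.2)).length
      ≤ (q.reverse.zip full.reverse).length := (List.takeWhile_sublist _).length_le
  have h2 : (q.reverse.zip full.reverse).length ≤ q.reverse.length := by
    rw [List.length_zip]; exact min_le_left _ _
  have := le_trans h1 h2
  rw [List.length_reverse] at this
  exact this

lemma label_length (c : List (Finset ℕ)) : (label c).length = c.length := by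
  rw [label_eq_labelF, labelF_length]

lemma card_foldr_le : ∀ (q : List (Finset ℕ)), (∀ B ∈ q, ∃ y : ℕ, B = {y}) →
    (q.foldr (· ∪ ·) ∅).card ≤ q.length := by
  intro q
  induction q with
  | nil => simp
  | cons B q ih =>
    intro h
    obtain ⟨y, hy⟩ := h B (by simp)
    calc (B ∪ q.foldr (· ∪ ·) ∅).card ≤ B.card + (q.foldr (· ∪ ·) ∅).card :=
          Finset.card_union_le _ _
    _ ≤ 1 + q.length := by
        have := ih (fun B' hB' => h B' (by simp [hB']))
        simp [hy]; omega
    _ = (B :: q).length := by simp [Nat.add_comm]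

lemma crit_card {L : AbsSC} {F : Finset ℕ → Finset ℕ → Prop} {Ord : Finset ℕ → List ℕ}
    (hF : IsDVF L F) (hOrd : OrdValid L F Ord) {c : List (Finset ℕ)}
    (hc : CritDelta L F Ord c) :
    CriticalF F (carrier c) ∧ (carrier c).card = c.length := by
  have hcrit : CriticalF F (carrier c) := ⟨crit_not_up hF hc, crit_not_down hF hc⟩
  have hccf := carrier_mem_faces hc.1
  obtain ⟨hnodup, htofin⟩ := hOrd (carrier c) hccf hcrit
  set o := Ord (carrier c) with ho
  set full := o.map (fun a => ({a} : Finset ℕ)) with hfull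
  set q := label c with hqdef
  clear_value o full q
  have hqlen : q.length = c.length := by rw [hqdef]; exact label_length c
  have hnonempty : ∀ t ∈ c, t.Nonempty := fun t ht => L.nonempty_of_mem t (hc.1.2.2 t ht)
  have hclen : c.length ≤ (carrier c).card :=
    length_le_card_carrier c hc.1.1 hc.1.2.1 hnonempty
  have holen : o.length = (carrier c).card := by
    rw [← htofin, List.toFinset_card_of_nodup hnodup]
  have hfullrev : full.reverse = o.reverse.map (fun a => ({a} : Finset ℕ)) := by
    rw [hfull, ← List.map_reverse]
  have hfullget : ∀ (j : ℕ) (y : ℕ), o.reverse[j]? = some y →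
      full.reverse[j]? = some ({y} : Finset ℕ) := by
    intro j y hy
    rw [hfullrev, List.getElem?_map, hy]
    rfl
  have hsing : ∀ B ∈ q, ∃ y : ℕ, B = {y} := by
    by_contra hcon
    push_neg at hcon
    obtain ⟨B₀, hB₀q, hB₀⟩ := hcon
    obtain ⟨i, hi⟩ : ∃ i, gcs q full = i := ⟨_, rfl⟩
    have hmatch' : ∀ j < i, ∃ B, q.reverse[j]? = some B ∧ full.reverse[j]? = some B := by
      rw [← hi]; exact gcs_elim_match q full
    have hmis' : ∀ B B', q.reverse[i]? = some B → full.reverse[i]? = some B' → B ≠ B' := by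
      rw [← hi]; exact gcs_elim_mis q full
    have hilt : i < q.length := by
      rcases Nat.lt_or_ge i q.length with h | h
      · exact h
      · exfalso
        obtain ⟨j, hj⟩ := List.mem_iff_getElem?.1 (List.mem_reverse.2 hB₀q)
        have hjlt : j < q.reverse.length := by
          obtain ⟨hlt, -⟩ := List.getElem?_eq_some_iff.1 hj
          exact hlt
        rw [List.length_reverse] at hjlt
        obtain ⟨B', h1, h2⟩ := hmatch' j (by omega)
        rw [hj] at h1
        obtain rfl : B' = B₀ := by injection h1 with h; exact h.symm
        rw [hfullrev, List.getElem?_map] at h2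
        obtain ⟨y, -, hy2⟩ := Option.map_eq_some_iff.1 h2
        exact hB₀ y hy2.symm
    have hio : i < o.length := by omega
    obtain ⟨x, hox⟩ : ∃ x, o.reverse[i]? = some x := by
      rw [List.getElem?_eq_getElem (by rw [List.length_reverse]; exact hio)]
      exact ⟨_, rfl⟩
    have hxc : x ∈ carrier c := by
      rw [← htofin, List.mem_toFinset]
      exact List.mem_reverse.1 (List.mem_of_getElem? hox)
    have hxu : x ∈ q.foldr (· ∪ ·) ∅ := by
      rw [hqdef, label_union (chain'_subset_of_ssubset hc.1.2.1)]
      exact hxc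
    obtain ⟨l, B, r, hq, hxB⟩ := mem_foldr_union q x hxu
    have hjge : i ≤ r.length := by
      by_contra hlt
      push_neg at hlt
      obtain ⟨B', h1, h2⟩ := hmatch' r.length hlt
      rw [get?_rev_pos hq] at h1
      obtain rfl : B' = B := by injection h1 with h; exact h.symm
      rw [hfullrev, List.getElem?_map] at h2
      obtain ⟨y, hy1, hy2⟩ := Option.map_eq_some_iff.1 h2
      obtain rfl : x = y := by
        have : x ∈ ({y} : Finset ℕ) := hy2 ▸ hxB
        simpa using this
      have : r.length = i := (List.getElem?_inj
        (by rw [List.length_reverse]; omega) (List.nodup_reverse.2 hnodup)).1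
        (by rw [hy1, hox])
      omega
    rcases Finset.eq_empty_or_nonempty (B.erase x) with hBe | hBe
    · -- B = {x} : merge with the following block
      have hBx : B = {x} := by
        ext a
        simp only [Finset.mem_singleton]
        constructor
        · intro ha
          by_contra hax
          have : a ∈ B.erase x := Finset.mem_erase.2 ⟨hax, ha⟩
          rw [hBe] at this; simp at this
        · rintro rfl; exact hxB
      subst hBx
      have hne : r.length ≠ i := by
        intro heq
        exact hmis' _ _ (by rw [← heq]; exact get?_rev_pos hq) (hfullget i x hox) rfl
      have hrlt : i < r.length := by omega
      obtain ⟨B₂, r', rfl⟩ : ∃ B₂ r', r = B₂ :: r' := by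
        cases r with
        | nil => simp at hrlt
        | cons B₂ r' => exact ⟨B₂, r', rfl⟩
      obtain ⟨d, hd, hdc, hdl, hdisj, hB₂ne⟩ := merge_lemma L hc.1 (hqdef ▸ hq)
      apply (hc.2 d).2
      refine ⟨hd, hc.1, Or.inl ⟨by rw [hdc]; exact hcrit, hdc.symm, ?_⟩⟩
      rw [hdc, ← ho]
      exact ⟨x, l, B₂, r', by rw [← hqdef, ← hfull, hi]; exact hox, fun h =>
          (Finset.disjoint_left.1 hdisj (Finset.mem_singleton_self x)) h, hB₂ne,
        by rw [hdl, ← Finset.insert_eq], hqdef ▸ hq⟩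
    · -- split x out of B
      obtain ⟨d, hd, hdc, hdl⟩ := split_lemma L hc.1 (hqdef ▸ hq) hxB hBe
      have hgcsd : gcs (label d) full = i := by
        rcases Nat.lt_or_ge i r.length with hlt | hge
        · -- i < r.length : shared suffix
          have e1 : q = (l ++ [B]) ++ r := by rw [hq]; simp
          have e2 : label d = (l ++ [{x}, B.erase x]) ++ r := by rw [hdl]; simp
          rw [e2]
          exact gcs_suffix hlt (e1 ▸ hi)
        · have heq : r.length = i := by omega
          apply gcs_intro'
          · intro j hj
            obtain ⟨Bj, hq1, hq2⟩ := hmatch' j hj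
            refine ⟨Bj, ?_, hq2⟩
            have e2 : label d = (l ++ [{x}]) ++ (B.erase x) :: r := by rw [hdl]; simp
            rw [get?_rev_lt e2 (by omega), ← get?_rev_lt hq (by omega)]
            exact hq1
          · intro B1 B2 h1 h2
            have e2 : label d = (l ++ [{x}]) ++ (B.erase x) :: r := by rw [hdl]; simp
            have h3 : (label d).reverse[i]? = some (B.erase x) := by
              rw [← heq]; exact get?_rev_pos e2
            rw [h3] at h1
            rw [hfullget i x hox] at h2
            obtain rfl : B1 = B.erase x := by injection h1 with h; exact h.symm
            obtain rfl : B2 = {x} := by injection h2 with h; exact h.symm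
            intro hE
            have : x ∈ B.erase x := hE ▸ Finset.mem_singleton_self x
            simp at this
      apply (hc.2 d).1
      refine ⟨hc.1, hd, Or.inl ⟨hcrit, hdc, ?_⟩⟩
      rw [← ho]
      refine ⟨x, l, B.erase x, r, ?_, by simp, hBe, ?_, hdl⟩
      · rw [← hfull, hgcsd]
        exact hox
      · rw [← hqdef, hq, Finset.insert_erase hxB]
  have h1 : (carrier c).card ≤ c.length := by
    rw [← label_union (chain'_subset_of_ssubset hc.1.2.1), ← hqdef, ← hqlen]
    exact card_foldr_le q hsing
  exact ⟨hcrit, le_antisymm h1 hclen⟩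

/-- Every gradient `n`-path of `Δ(F)` has all its `n`-simplexes lying in the
interiors of `n`-simplexes of `L`: the carrier of each `n`-simplex of the path is an
`n`-simplex of `L`. -/
theorem gradient_path_stays_in_n_simplexes (L : AbsSC) (F : Finset ℕ → Finset ℕ → Prop)
    (Ord : Finset ℕ → List ℕ) (n : ℕ) (hF : IsDVF L F)
    (hMorse : ¬ ∃ Q : VPath FacetFS F, 0 < Q.len ∧ Q.lower Q.len = Q.lower 0)
    (hOrd : OrdValid L F Ord)
    (P : VPath FacetChain (DeltaPair L F Ord))
    (hgood : ∀ i ≤ P.len, IsBarySimplex L (P.upper i) ∧ IsBarySimplex L (P.lower i))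
    (hdim : ∀ i ≤ P.len, (P.upper i).length = n + 1 ∧ (P.lower i).length = n)
    (hstart : CritDelta L F Ord (P.upper 0))
    (hend : CritDelta L F Ord (P.lower P.len)) :
    ∀ i ≤ P.len, (carrier (P.upper i)).card = n + 1 := by
  have hkey : ∀ i ≤ P.len,
      (carrier (P.upper i)).card = n + 1 ∧ (∀ t, ¬ F (carrier (P.upper i)) t) := by
    intro i
    induction i with
    | zero =>
      intro _
      have h := crit_card hF hOrd hstart
      have hlen := (hdim 0 (Nat.zero_le _)).1
      exact ⟨by rw [h.2, hlen], h.1.1⟩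
    | succ i ih =>
      intro hle
      have hile : i ≤ P.len := by omega
      have hilt : i < P.len := by omega
      obtain ⟨hcard, hnup⟩ := ih hile
      have hlow := (hgood i hile).2
      have hup := (hgood i hile).1
      have hup' := (hgood (i+1) hle).1
      have hlen_lo : (P.lower i).length = n := (hdim i hile).2
      have hlen_up' : (P.upper (i+1)).length = n+1 := (hdim (i+1) hle).1
      have hsubl : (P.lower i).Sublist (P.upper i) := (P.face_step i hile).1
      have hmem : carrier (P.lower i) ∈ P.upper i := hsubl.subset (carrier_mem hlow.1)
      have hsub : carrier (P.lower i) ⊆ carrier (P.upper i) :=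
        mem_subset_carrier _ hup.2.1 _ hmem
      have hlocard : (carrier (P.lower i)).card ≤ n + 1 := by
        have := Finset.card_le_card hsub
        omega
      have hup'card : n + 1 ≤ (carrier (P.upper (i+1))).card := by
        have := length_le_card_carrier (P.upper (i+1)) hup'.1 hup'.2.1
          (fun t ht => L.nonempty_of_mem t (hup'.2.2 t ht))
        omega
      have hlow_ge : n ≤ (carrier (P.lower i)).card := by
        have := length_le_card_carrier (P.lower i) hlow.1 hlow.2.1
          (fun t ht => L.nonempty_of_mem t (hlow.2.2 t ht))
        omega
      obtain ⟨-, -, hbranch⟩ := P.pair_step i hilt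
      rcases hbranch with ⟨hcr, hceq, -⟩ | ⟨s, v, hFs, hvs, hcase⟩
      · constructor
        · have : (carrier (P.upper (i+1))).card ≤ n+1 := by rw [hceq]; exact hlocard
          omega
        · rw [hceq]
          exact hcr.1
      · rcases hcase with ⟨hc1, hc2, -⟩ | ⟨hc1, hc2, -⟩
        · -- rule 1
          have hscard : s.card ≤ n+1 := hc1 ▸ hlocard
          have hscard_ge : n ≤ s.card := hc1 ▸ hlow_ge
          have hsne : s.card ≠ n + 1 := by
            intro h
            have heq : carrier (P.lower i) = carrier (P.upper i) :=
              Finset.eq_of_subset_of_card_le hsub (by rw [hcard, hc1, h])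
            exact hnup _ (by rw [← heq, hc1]; exact hFs)
          constructor
          · rw [hc2, Finset.card_insert_of_notMem hvs]
            omega
          · rw [hc2]
            intro t htF
            exact hF.2.2.2 s (insert v s) t hFs htF
        · constructor
          · have : (carrier (P.upper (i+1))).card ≤ n+1 := by rw [hc2, ← hc1]; exact hlocard
            omega
          · rw [hc2]
            intro t htF
            exact hF.2.2.2 s (insert v s) t hFs htF
  intro i hi
  exact (hkey i hi).1
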